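/- arXiv:2401.04030 — 7 statements merged into one kernel-verified Lean document; each statement's English description precedes it below -/
import Mathlib

section
/- Every element of the monoid A_k (pairs of weakly decreasing nonnegative integer vectors (λ, μ) ∈ ℕ^k × ℕ^k with λ_i ≥ μ_i for all i) can be written as a finite sum of elements of the set U_k = {((1^a, 0^b), (1^c, 0^d)) : a + b = c + d = k, a ≥ c, a ≥ 1}. -/
/-- `(l, m)` is a 2-row plane partition with `k` columns. -/
def InA (k : ℕ) (p : (Fin k → ℕ) × (Fin k → ℕ)) : Prop :=
  (∀ i j : Fin k, i ≤ j → p.1 j ≤ p.1 i) ∧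
  (∀ i j : Fin k, i ≤ j → p.2 j ≤ p.2 i) ∧
  (∀ i, p.2 i ≤ p.1 i)

/-- The vector consisting of `a` ones followed by `k - a` zeros. -/
def onesZeros (k a : ℕ) : Fin k → ℕ :=
  fun i => if (i : ℕ) < a then 1 else 0

/-- The set `U_k` of pairs `((1^a,0^b),(1^c,0^d))` with `a+b = c+d = k`,
`a ≥ c`, `a ≥ 1`. -/
def Uset (k : ℕ) : Set ((Fin k → ℕ) × (Fin k → ℕ)) :=
  {p | ∃ a c : ℕ, a ≤ k ∧ c ≤ a ∧ 1 ≤ a ∧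
        p = (onesZeros k a, onesZeros k c)}

lemma key_lemma (k : ℕ) (f : Fin k → ℕ) (hf : ∀ i j : Fin k, i ≤ j → f j ≤ f i)
    (i : Fin k) :
    (i : ℕ) < (Finset.univ.filter (fun j => 1 ≤ f j)).card ↔ 1 ≤ f i := by
  constructor
  · intro h
    by_contra hfi
    have hsub : (Finset.univ.filter (fun j => 1 ≤ f j)) ⊆ Finset.Iio i := by
      intro j hj
      simp only [Finset.mem_filter] at hj
      rw [Finset.mem_Iio]
      by_contra hij
      exact hfi (le_trans hj.2 (hf i j (le_of_not_gt hij)))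
    have := Finset.card_le_card hsub
    rw [Fin.card_Iio] at this
    omega
  · intro h
    have hsub : Finset.Iic i ⊆ (Finset.univ.filter (fun j => 1 ≤ f j)) := by
      intro j hj
      rw [Finset.mem_Iic] at hj
      simp only [Finset.mem_filter, Finset.mem_univ, true_and]
      exact le_trans h (hf j i hj)
    have := Finset.card_le_card hsub
    rw [Fin.card_Iic] at this
    omega

lemma aux_lemma (k : ℕ) : ∀ (N : ℕ) (p : (Fin k → ℕ) × (Fin k → ℕ)),
    InA k p → (∑ i, (p.1 i + p.2 i)) ≤ N →
    ∃ (n : ℕ) (f : Fin n → (Fin k → ℕ) × (Fin k → ℕ)),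
      (∀ j, f j ∈ Uset k) ∧ p = ∑ j, f j := by
  intro N
  induction N with
  | zero =>
    intro p hp hsum
    refine ⟨0, fun j => 0, fun j => j.elim0, ?_⟩
    have : ∀ i : Fin k, p.1 i = 0 ∧ p.2 i = 0 := by
      intro i
      have h1 : p.1 i + p.2 i ≤ 0 := le_trans
        (Finset.single_le_sum (f := fun i => p.1 i + p.2 i) (fun _ _ => Nat.zero_le _)
          (Finset.mem_univ i)) hsum
      omega
    ext i <;> simp [(this i).1, (this i).2]
  | succ N ih =>
    intro p hp hsum
    obtain ⟨h1, h2, h3⟩ := hp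
    set a := (Finset.univ.filter (fun j => 1 ≤ p.1 j)).card with ha
    set c := (Finset.univ.filter (fun j => 1 ≤ p.2 j)).card with hc
    by_cases haz : a = 0
    · -- p = 0
      refine ⟨0, fun j => 0, fun j => j.elim0, ?_⟩
      have hz : ∀ i : Fin k, p.1 i = 0 := by
        intro i
        have := (key_lemma k p.1 h1 i).2
        by_contra h
        have := this (by omega)
        omega
      have hz2 : ∀ i : Fin k, p.2 i = 0 := fun i => by
        have := h3 i; have := hz i; omega
      ext i <;> simp [hz i, hz2 i]
    · -- strip top layer
      have hak : a ≤ k := le_trans (Finset.card_le_card (Finset.filter_subset _ _))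
        (by simp)
      have hca : c ≤ a :=
        Finset.card_le_card (by
          intro j hj
          simp only [Finset.mem_filter, Finset.mem_univ, true_and] at *
          exact le_trans hj (h3 j))
      have ha1 : 1 ≤ a := by omega
      have hq1 : ∀ i : Fin k, onesZeros k a i = min (p.1 i) 1 := by
        intro i
        rw [onesZeros]
        by_cases h : (i : ℕ) < a
        · have := (key_lemma k p.1 h1 i).1 h
          simp [h]; omega
        · have : ¬ 1 ≤ p.1 i := fun hh => h ((key_lemma k p.1 h1 i).2 hh)
          simp [h]; omega
      have hq2 : ∀ i : Fin k, onesZeros k c i = min (p.2 i) 1 := by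
        intro i
        rw [onesZeros]
        by_cases h : (i : ℕ) < c
        · have := (key_lemma k p.2 h2 i).1 h
          simp [h]; omega
        · have : ¬ 1 ≤ p.2 i := fun hh => h ((key_lemma k p.2 h2 i).2 hh)
          simp [h]; omega
      set p' : (Fin k → ℕ) × (Fin k → ℕ) :=
        (fun i => p.1 i - 1, fun i => p.2 i - 1) with hp'
      have hp'A : InA k p' := by
        refine ⟨fun i j hij => ?_, fun i j hij => ?_, fun i => ?_⟩
        · exact Nat.sub_le_sub_right (h1 i j hij) 1
        · exact Nat.sub_le_sub_right (h2 i j hij) 1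
        · exact Nat.sub_le_sub_right (h3 i) 1
      -- there is an index with p.1 i ≥ 1
      obtain ⟨i0, hi0⟩ : ∃ i0 : Fin k, 1 ≤ p.1 i0 := by
        have hk : 0 < k := lt_of_lt_of_le ha1 hak
        exact ⟨⟨0, hk⟩, (key_lemma k p.1 h1 ⟨0, hk⟩).1 (by show (0:ℕ) < a; omega)⟩
      have hlt : (∑ i, (p'.1 i + p'.2 i)) < ∑ i, (p.1 i + p.2 i) := by
        apply Finset.sum_lt_sum (fun i _ => by
          simp only [hp']; omega)
        exact ⟨i0, Finset.mem_univ i0, by simp only [hp']; omega⟩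
      have hsum' : (∑ i, (p'.1 i + p'.2 i)) ≤ N := by omega
      obtain ⟨n, f, hf, hpf⟩ := ih p' hp'A hsum'
      refine ⟨n + 1, Fin.cons (onesZeros k a, onesZeros k c) f, ?_, ?_⟩
      · intro j
        refine Fin.cases ?_ ?_ j
        · exact ⟨a, c, hak, hca, ha1, rfl⟩
        · intro j; simpa using hf j
      · rw [Fin.sum_cons, ← hpf]
        have e1 : p.1 = fun i => onesZeros k a i + p'.1 i := by
          funext i
          rw [hq1 i]
          simp only [hp']
          omega
        have e2 : p.2 = fun i => onesZeros k c i + p'.2 i := by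
          funext i
          rw [hq2 i]
          simp only [hp']
          have := h3 i
          omega
        ext i
        · exact congrFun e1 i
        · exact congrFun e2 i

theorem stmt_2 (k : ℕ) (p : (Fin k → ℕ) × (Fin k → ℕ)) (hp : InA k p) :
    ∃ (n : ℕ) (f : Fin n → (Fin k → ℕ) × (Fin k → ℕ)),
      (∀ j, f j ∈ Uset k) ∧ p = ∑ j, f j := by
  exact aux_lemma k (∑ i, (p.1 i + p.2 i)) p hp le_rfl
end

section
/- Each element of U_k = {((1^a, 0^b), (1^c, 0^d)) : a + b = c + d = k, a ≥ c, a ≥ 1} is irreducible in A_k: it cannot be written as a sum of two nonzero elements of A_k. -/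
/-! Every entry of an element of `A_k` is bounded by the first entry of its top row, so a nonzero
element has top-left entry at least `1`, while every element of `U_k` has top-left entry exactly `1`. -/

theorem InA.eq_zero_of_fst_eq_zero {k : ℕ} {p : (Fin k → ℕ) × (Fin k → ℕ)} (hp : InA k p)
    (i : Fin k) (hi : (i : ℕ) = 0) (h : p.1 i = 0) : p = 0 := by
  obtain ⟨hfst_anti, -, hsnd_le⟩ := hp
  have hfst : ∀ j, p.1 j = 0 := fun j =>
    Nat.eq_zero_of_le_zero (h ▸ hfst_anti i j (Fin.le_iff_val_le_val.2 (by omega)))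
  ext j
  · exact hfst j
  · exact Nat.eq_zero_of_le_zero (hfst j ▸ hsnd_le j)

theorem InA.fst_pos_of_ne_zero {k : ℕ} {p : (Fin k → ℕ) × (Fin k → ℕ)} (hp : InA k p)
    (hne : p ≠ 0) (i : Fin k) (hi : (i : ℕ) = 0) : 0 < p.1 i :=
  Nat.pos_of_ne_zero fun h => hne (hp.eq_zero_of_fst_eq_zero i hi h)

theorem onesZeros_apply_of_lt {k a : ℕ} {i : Fin k} (hi : (i : ℕ) < a) : onesZeros k a i = 1 :=
  if_pos hi

theorem stmt_3 (k : ℕ) (u : (Fin k → ℕ) × (Fin k → ℕ)) (hu : u ∈ Uset k) :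
    ¬ ∃ p q : (Fin k → ℕ) × (Fin k → ℕ),
        InA k p ∧ InA k q ∧ p ≠ 0 ∧ q ≠ 0 ∧ u = p + q := by
  rintro ⟨p, q, hp, hq, hp0, hq0, rfl⟩
  obtain ⟨a, c, -, -, ha, hpq⟩ := hu
  have hk : 0 < k := Nat.pos_of_ne_zero (by rintro rfl; exact hp0 (Subsingleton.elim _ _))
  have hcorner : p.1 ⟨0, hk⟩ + q.1 ⟨0, hk⟩ = 1 := by
    rw [← onesZeros_apply_of_lt (i := ⟨0, hk⟩) (Nat.lt_of_lt_of_le Nat.one_pos ha)]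
    exact congrFun (congrArg Prod.fst hpq) ⟨0, hk⟩
  have hp1 := hp.fst_pos_of_ne_zero hp0 ⟨0, hk⟩ rfl
  have hq1 := hq.fst_pos_of_ne_zero hq0 ⟨0, hk⟩ rfl
  omega
end

section
/- The set U_k = {((1^a, 0^b), (1^c, 0^d)) : a + b = c + d = k, a ≥ c, a ≥ 1} is the unique minimal generating set (Hilbert basis) of the monoid A_k: U_k generates A_k, each of its elements is irreducible, and every generating set of A_k contains U_k. -/
/-- The additive monoid `A_k` of 2-row plane partitions with `k` columns. -/
def Ak (k : ℕ) : AddSubmonoid ((Fin k → ℕ) × (Fin k → ℕ)) where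
  carrier := {p | (∀ i j : Fin k, i ≤ j → p.1 j ≤ p.1 i) ∧
    (∀ i j : Fin k, i ≤ j → p.2 j ≤ p.2 i) ∧ (∀ i, p.2 i ≤ p.1 i)}
  zero_mem' := by
    refine ⟨fun i j _ => le_rfl, fun i j _ => le_rfl, fun i => le_rfl⟩
  add_mem' := by
    rintro p q ⟨h1, h2, h3⟩ ⟨g1, g2, g3⟩
    exact ⟨fun i j hij => add_le_add (h1 i j hij) (g1 i j hij),
           fun i j hij => add_le_add (h2 i j hij) (g2 i j hij),
           fun i => add_le_add (h3 i) (g3 i)⟩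

lemma mem_Ak_iff {k : ℕ} (p : (Fin k → ℕ) × (Fin k → ℕ)) :
    p ∈ Ak k ↔ (∀ i j : Fin k, i ≤ j → p.1 j ≤ p.1 i) ∧
      (∀ i j : Fin k, i ≤ j → p.2 j ≤ p.2 i) ∧ (∀ i, p.2 i ≤ p.1 i) := Iff.rfl

lemma Uset_subset_Ak (k : ℕ) : Uset k ⊆ (Ak k : Set _) := by
  rintro p ⟨a, c, hak, hca, ha1, rfl⟩
  refine ⟨?_, ?_, ?_⟩
  · intro i j hij
    have : (i : ℕ) ≤ j := hij
    simp only [onesZeros]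
    split <;> split <;> omega
  · intro i j hij
    have : (i : ℕ) ≤ j := hij
    simp only [onesZeros]
    split <;> split <;> omega
  · intro i
    simp only [onesZeros]
    split <;> split <;> omega

/-- Initial segment lemma: for a weakly decreasing `v`, `v i ≥ 1` iff `i` is below the
number of indices where `v ≥ 1`. -/
lemma initseg {k : ℕ} (v : Fin k → ℕ) (hv : ∀ i j : Fin k, i ≤ j → v j ≤ v i) (i : Fin k) :
    1 ≤ v i ↔ (i : ℕ) < (Finset.univ.filter (fun j => 1 ≤ v j)).card := by
  constructor
  · intro h
    have hsub : Finset.Iic i ⊆ Finset.univ.filter (fun j => 1 ≤ v j) := by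
      intro j hj
      simp only [Finset.mem_Iic] at hj
      simp only [Finset.mem_filter, Finset.mem_univ, true_and]
      exact le_trans h (hv j i hj)
    have := Finset.card_le_card hsub
    rw [Fin.card_Iic] at this
    omega
  · intro h
    by_contra hc
    have hsub : Finset.univ.filter (fun j => 1 ≤ v j) ⊆ Finset.Iio i := by
      intro j hj
      simp only [Finset.mem_filter, Finset.mem_univ, true_and] at hj
      simp only [Finset.mem_Iio]
      by_contra hji
      exact hc (le_trans hj (hv i j (le_of_not_gt hji)))
    have := Finset.card_le_card hsub
    rw [Fin.card_Iio] at this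
    omega

lemma ne_zero_first {k : ℕ} {p : (Fin k → ℕ) × (Fin k → ℕ)} (hp : p ∈ Ak k) (h : p ≠ 0)
    (hk : 0 < k) : 1 ≤ p.1 ⟨0, hk⟩ := by
  obtain ⟨h1, h2, h3⟩ := hp
  by_contra hc
  apply h
  have hz : ∀ i, p.1 i = 0 := by
    intro i
    have := h1 ⟨0, hk⟩ i (by simp [Fin.le_def])
    omega
  have hz2 : ∀ i, p.2 i = 0 := by
    intro i
    have := h3 i
    have := hz i
    omega
  ext i
  · exact hz i
  · exact hz2 i

lemma gen_mem {k : ℕ} : ∀ n (p : (Fin k → ℕ) × (Fin k → ℕ)),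
    (∑ i, p.1 i) + (∑ i, p.2 i) = n →
    p ∈ Ak k → p ∈ AddSubmonoid.closure (Uset k) := by
  intro n
  induction n using Nat.strong_induction_on with
  | _ n ih =>
    intro p hN hp
    by_cases hz : p = 0
    · subst hz; exact zero_mem _
    obtain ⟨h1, h2, h3⟩ := hp
    set a := (Finset.univ.filter (fun j => 1 ≤ p.1 j)).card with ha
    set c := (Finset.univ.filter (fun j => 1 ≤ p.2 j)).card with hc
    have hA : ∀ i : Fin k, 1 ≤ p.1 i ↔ (i : ℕ) < a := fun i => initseg p.1 h1 i
    have hC : ∀ i : Fin k, 1 ≤ p.2 i ↔ (i : ℕ) < c := fun i => initseg p.2 h2 i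
    have hca : c ≤ a := by
      apply Finset.card_le_card
      intro j hj
      simp only [Finset.mem_filter, Finset.mem_univ, true_and] at *
      exact le_trans hj (h3 j)
    have hak : a ≤ k := by
      have := Finset.card_le_card (Finset.subset_univ
        (Finset.univ.filter (fun j => 1 ≤ p.1 j)))
      simpa using this
    have ha1 : 1 ≤ a := by
      by_contra hcon
      apply hz
      have hz1 : ∀ i, p.1 i = 0 := by
        intro i
        have := (hA i).mp
        omega
      have hz2 : ∀ i, p.2 i = 0 := by
        intro i
        have := h3 i
        have := hz1 i
        omega
      ext i
      · exact hz1 i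
      · exact hz2 i
    have hk : 0 < k := lt_of_lt_of_le ha1 hak
    set u : (Fin k → ℕ) × (Fin k → ℕ) := (onesZeros k a, onesZeros k c) with hu
    set q : (Fin k → ℕ) × (Fin k → ℕ) :=
      (fun i => p.1 i - onesZeros k a i, fun i => p.2 i - onesZeros k c i) with hqdef
    have hpu : p = u + q := by
      ext i
      · have := (hA i).mpr
        have := (hA i).mp
        simp only [hu, hqdef, Prod.fst_add, Pi.add_apply, onesZeros]
        split <;> omega
      · have := (hC i).mpr
        have := (hC i).mp
        simp only [hu, hqdef, Prod.snd_add, Pi.add_apply, onesZeros]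
        split <;> omega
    have hqA : q ∈ Ak k := by
      refine ⟨?_, ?_, ?_⟩
      · intro i j hij
        have hij' : (i : ℕ) ≤ j := hij
        have hAi := hA i; have hAj := hA j
        have hij2 := h1 i j hij
        simp only [hqdef, onesZeros]
        split <;> split <;> omega
      · intro i j hij
        have hij' : (i : ℕ) ≤ j := hij
        have hCi := hC i; have hCj := hC j
        have hij2 := h2 i j hij
        simp only [hqdef, onesZeros]
        split <;> split <;> omega
      · intro i
        have hAi := hA i; have hCi := hC i
        have := h3 i
        simp only [hqdef, onesZeros]
        split <;> split <;> omega
    have hsum1 : ∀ i, q.1 i ≤ p.1 i := by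
      intro i; simp only [hqdef]; omega
    have hsum2 : ∀ i, q.2 i ≤ p.2 i := by
      intro i; simp only [hqdef]; omega
    have hstrict : q.1 ⟨0, hk⟩ < p.1 ⟨0, hk⟩ := by
      have := (hA ⟨0, hk⟩).mpr ha1
      simp only [hqdef, onesZeros]
      split <;> omega
    have hlt : (∑ i, q.1 i) + (∑ i, q.2 i) < n := by
      have hl1 : ∑ i, q.1 i < ∑ i, p.1 i :=
        Finset.sum_lt_sum (fun i _ => hsum1 i) ⟨⟨0, hk⟩, Finset.mem_univ _, hstrict⟩
      have hl2 : ∑ i, q.2 i ≤ ∑ i, p.2 i :=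
        Finset.sum_le_sum (fun i _ => hsum2 i)
      omega
    have hqcl : q ∈ AddSubmonoid.closure (Uset k) := ih _ hlt q rfl hqA
    have hucl : u ∈ AddSubmonoid.closure (Uset k) :=
      AddSubmonoid.subset_closure ⟨a, c, hak, hca, ha1, rfl⟩
    rw [hpu]
    exact add_mem hucl hqcl

lemma irred {k : ℕ} (u : (Fin k → ℕ) × (Fin k → ℕ)) (hu : u ∈ Uset k) :
    ¬ ∃ p q, p ∈ Ak k ∧ q ∈ Ak k ∧ p ≠ 0 ∧ q ≠ 0 ∧ u = p + q := by
  obtain ⟨a, c, hak, hca, ha1, rfl⟩ := hu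
  rintro ⟨p, q, hp, hq, hp0, hq0, heq⟩
  have hk : 0 < k := lt_of_lt_of_le ha1 hak
  have h1 := ne_zero_first hp hp0 hk
  have h2 := ne_zero_first hq hq0 hk
  have he : onesZeros k a ⟨0, hk⟩ = p.1 ⟨0, hk⟩ + q.1 ⟨0, hk⟩ := by
    have := congrFun (congrArg Prod.fst heq) ⟨0, hk⟩
    simpa using this
  have hone : onesZeros k a ⟨0, hk⟩ = 1 := by
    simp only [onesZeros]
    split <;> omega
  omega

theorem stmt_4 (k : ℕ) :
    AddSubmonoid.closure (Uset k) = Ak k ∧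
    (∀ u ∈ Uset k,
      ¬ ∃ p q, p ∈ Ak k ∧ q ∈ Ak k ∧ p ≠ 0 ∧ q ≠ 0 ∧ u = p + q) ∧
    (∀ S : Set ((Fin k → ℕ) × (Fin k → ℕ)),
      S ⊆ (Ak k : Set _) → AddSubmonoid.closure S = Ak k → Uset k ⊆ S) := by
  refine ⟨?_, fun u hu => irred u hu, ?_⟩
  · apply le_antisymm
    · exact AddSubmonoid.closure_le.mpr (Uset_subset_Ak k)
    · intro p hp
      exact gen_mem _ p rfl hp
  · intro S hS hclos u hu
    obtain ⟨a, c, hak, hca, ha1, rfl⟩ := hu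
    have hk : 0 < k := lt_of_lt_of_le ha1 hak
    have huU : (onesZeros k a, onesZeros k c) ∈ Uset k := ⟨a, c, hak, hca, ha1, rfl⟩
    have huA : (onesZeros k a, onesZeros k c) ∈ Ak k := Uset_subset_Ak k huU
    have hucl : (onesZeros k a, onesZeros k c) ∈ AddSubmonoid.closure S := by
      rw [hclos]; exact huA
    obtain ⟨l, hl, hsum⟩ := AddSubmonoid.exists_multiset_of_mem_closure hucl
    set l' := l.filter (fun x => x ≠ 0) with hl'
    have hsum' : l'.sum = (onesZeros k a, onesZeros k c) := by
      have key := Multiset.sum_filter_add_sum_filter_not (s := l) (fun x => x ≠ 0)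
      have hz : (l.filter (fun x => ¬ x ≠ 0)).sum = 0 := by
        apply Multiset.sum_eq_zero
        intro x hx
        have := (Multiset.mem_filter.mp hx).2
        simpa using this
      rw [hz, add_zero] at key
      rw [hl', key, hsum]
    have hl'S : ∀ x ∈ l', x ∈ S ∧ x ≠ 0 := by
      intro x hx
      rw [hl', Multiset.mem_filter] at hx
      exact ⟨hl x hx.1, hx.2⟩
    have hune : (onesZeros k a, onesZeros k c) ≠ 0 := by
      intro h
      have := congrFun (congrArg Prod.fst h) ⟨0, hk⟩
      simp only [onesZeros, Prod.fst_zero, Pi.zero_apply] at this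
      rw [if_pos (by omega : (0 : ℕ) < a)] at this
      omega
    rcases Multiset.empty_or_exists_mem l' with h0 | ⟨x, hx⟩
    · rw [h0] at hsum'
      exact absurd hsum'.symm hune
    obtain ⟨t, ht⟩ := Multiset.exists_cons_of_mem hx
    rw [ht] at hsum'
    have hxS' := hl'S x hx
    have htS : ∀ y ∈ t, y ∈ S ∧ y ≠ 0 := fun y hy =>
      hl'S y (ht ▸ Multiset.mem_cons_of_mem hy)
    rcases Multiset.empty_or_exists_mem t with h0 | ⟨y, hy⟩
    · rw [h0] at hsum'
      simp only [Multiset.sum_cons, Multiset.sum_zero, add_zero] at hsum'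
      rw [← hsum']
      exact hxS'.1
    · exfalso
      apply irred (onesZeros k a, onesZeros k c) huU
      obtain ⟨hxS, hx0⟩ := hxS'
      have hxA : x ∈ Ak k := hS hxS
      have htA : t.sum ∈ Ak k := by
        apply AddSubmonoid.multiset_sum_mem
        intro y' hy'
        exact hS (htS y' hy').1
      have htne : t.sum ≠ 0 := by
        obtain ⟨t', ht'⟩ := Multiset.exists_cons_of_mem hy
        obtain ⟨hyS, hy0⟩ := htS y hy
        have hyA : y ∈ Ak k := hS hyS
        have hy1 := ne_zero_first hyA hy0 hk
        intro h
        rw [ht'] at h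
        have := congrFun (congrArg Prod.fst h) ⟨0, hk⟩
        simp only [Multiset.sum_cons, Prod.fst_add, Pi.add_apply, Prod.fst_zero,
          Pi.zero_apply] at this
        omega
      exact ⟨x, t.sum, hxA, htA, hx0, htne, by rw [← hsum', Multiset.sum_cons]⟩
end

section
/- The monoid A_2 ⊆ ℕ^2 × ℕ^2 of pairs (λ, μ) with λ_1 ≥ λ_2, μ_1 ≥ μ_2, λ_1 ≥ μ_1, λ_2 ≥ μ_2 (all nonnegative) is generated by exactly the five elements (1,0,0,0), (1,0,1,0), (1,1,0,0), (1,1,1,0), (1,1,1,1), written as vectors (λ_1, λ_2, μ_1, μ_2). -/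
/-- The additive monoid `A_2` of 2×2 plane partitions, as vectors
`(λ₁, λ₂, μ₁, μ₂)` in `ℕ⁴`. -/
def A2 : AddSubmonoid (Fin 4 → ℕ) where
  carrier := {v | v 1 ≤ v 0 ∧ v 3 ≤ v 2 ∧ v 2 ≤ v 0 ∧ v 3 ≤ v 1}
  zero_mem' := ⟨le_rfl, le_rfl, le_rfl, le_rfl⟩
  add_mem' := by
    rintro p q ⟨h1, h2, h3, h4⟩ ⟨g1, g2, g3, g4⟩
    exact ⟨add_le_add h1 g1, add_le_add h2 g2, add_le_add h3 g3,
           add_le_add h4 g4⟩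

theorem stmt_8 :
    AddSubmonoid.closure
      ({![1,0,0,0], ![1,0,1,0], ![1,1,0,0], ![1,1,1,0], ![1,1,1,1]} :
        Set (Fin 4 → ℕ)) = A2 := by
  apply le_antisymm
  · rw [AddSubmonoid.closure_le]
    rintro v (rfl | rfl | rfl | rfl | rfl) <;>
      exact ⟨by decide, by decide, by decide, by decide⟩
  · rintro v ⟨h1, h2, h3, h4⟩
    set S : Set (Fin 4 → ℕ) :=
      {![1,0,0,0], ![1,0,1,0], ![1,1,0,0], ![1,1,1,0], ![1,1,1,1]} with hS
    have key : v = (v 0 - max (v 1) (v 2)) • ![1,0,0,0]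
        + (v 2 - min (v 1) (v 2)) • ![1,0,1,0]
        + (v 1 - min (v 1) (v 2)) • ![1,1,0,0]
        + (min (v 1) (v 2) - v 3) • ![1,1,1,0]
        + v 3 • ![1,1,1,1] := by
      funext i
      fin_cases i <;>
        simp [smul_eq_mul, Pi.add_apply, Pi.smul_apply] <;> omega
    rw [key]
    have m1 : (![1,0,0,0] : Fin 4 → ℕ) ∈ S := by simp [hS]
    have m2 : (![1,0,1,0] : Fin 4 → ℕ) ∈ S := by simp [hS]
    have m3 : (![1,1,0,0] : Fin 4 → ℕ) ∈ S := by simp [hS]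
    have m4 : (![1,1,1,0] : Fin 4 → ℕ) ∈ S := by simp [hS]
    have m5 : (![1,1,1,1] : Fin 4 → ℕ) ∈ S := by simp [hS]
    exact add_mem (add_mem (add_mem (add_mem
      (nsmul_mem (AddSubmonoid.subset_closure m1) (v 0 - max (v 1) (v 2)))
      (nsmul_mem (AddSubmonoid.subset_closure m2) (v 2 - min (v 1) (v 2))))
      (nsmul_mem (AddSubmonoid.subset_closure m3) (v 1 - min (v 1) (v 2))))
      (nsmul_mem (AddSubmonoid.subset_closure m4) (min (v 1) (v 2) - v 3)))
      (nsmul_mem (AddSubmonoid.subset_closure m5) (v 3))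
end

section
/- The monoid A_3 ⊆ ℕ^3 × ℕ^3 of 2-row, 3-column plane partitions is generated by exactly the nine elements (1,0,0,0,0,0), (1,0,0,1,0,0), (1,1,0,0,0,0), (1,1,0,1,0,0), (1,1,0,1,1,0), (1,1,1,0,0,0), (1,1,1,1,0,0), (1,1,1,1,1,0), (1,1,1,1,1,1), written as vectors (λ_1, λ_2, λ_3, μ_1, μ_2, μ_3). -/
/-- The additive monoid `A_3` of 2-row, 3-column plane partitions, as
vectors `(λ₁, λ₂, λ₃, μ₁, μ₂, μ₃)` in `ℕ⁶`. -/
def A3 : AddSubmonoid (Fin 6 → ℕ) where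
  carrier := {v | v 1 ≤ v 0 ∧ v 2 ≤ v 1 ∧ v 4 ≤ v 3 ∧ v 5 ≤ v 4 ∧
    v 3 ≤ v 0 ∧ v 4 ≤ v 1 ∧ v 5 ≤ v 2}
  zero_mem' := ⟨le_rfl, le_rfl, le_rfl, le_rfl, le_rfl, le_rfl, le_rfl⟩
  add_mem' := by
    rintro p q ⟨h1, h2, h3, h4, h5, h6, h7⟩ ⟨g1, g2, g3, g4, g5, g6, g7⟩
    exact ⟨add_le_add h1 g1, add_le_add h2 g2, add_le_add h3 g3,
           add_le_add h4 g4, add_le_add h5 g5, add_le_add h6 g6,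
           add_le_add h7 g7⟩

lemma mem_A3_iff (v : Fin 6 → ℕ) : v ∈ A3 ↔ (v 1 ≤ v 0 ∧ v 2 ≤ v 1 ∧ v 4 ≤ v 3 ∧ v 5 ≤ v 4 ∧
    v 3 ≤ v 0 ∧ v 4 ≤ v 1 ∧ v 5 ≤ v 2) := Iff.rfl

lemma mem_gen (b c d e f : ℕ) (hb : b ≤ 1) (hc : c ≤ 1) (hd : d ≤ 1) (he : e ≤ 1)
    (hf : f ≤ 1) (h1 : b ≤ 1) (h2 : c ≤ b) (h3 : e ≤ d) (h4 : f ≤ e) (h5 : d ≤ 1)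
    (h6 : e ≤ b) (h7 : f ≤ c) :
    (![1,b,c,d,e,f] : Fin 6 → ℕ) ∈
      ({![1,0,0,0,0,0], ![1,0,0,1,0,0], ![1,1,0,0,0,0], ![1,1,0,1,0,0],
        ![1,1,0,1,1,0], ![1,1,1,0,0,0], ![1,1,1,1,0,0], ![1,1,1,1,1,0],
        ![1,1,1,1,1,1]} : Set (Fin 6 → ℕ)) := by
  simp only [Set.mem_insert_iff, Set.mem_singleton_iff]
  interval_cases b <;> interval_cases c <;> interval_cases d <;> interval_cases e <;>
    interval_cases f <;> simp_all <;> decide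



theorem stmt_9 :
    AddSubmonoid.closure
      ({![1,0,0,0,0,0], ![1,0,0,1,0,0], ![1,1,0,0,0,0], ![1,1,0,1,0,0],
        ![1,1,0,1,1,0], ![1,1,1,0,0,0], ![1,1,1,1,0,0], ![1,1,1,1,1,0],
        ![1,1,1,1,1,1]} : Set (Fin 6 → ℕ)) = A3 := by
  apply le_antisymm
  · rw [AddSubmonoid.closure_le]
    rintro v hv
    simp only [Set.mem_insert_iff, Set.mem_singleton_iff] at hv
    rcases hv with rfl|rfl|rfl|rfl|rfl|rfl|rfl|rfl|rfl <;>
      exact mem_A3_iff _ |>.2 (by decide)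
  · have key : ∀ (n : ℕ) (v : Fin 6 → ℕ), v 1 ≤ v 0 → v 2 ≤ v 1 → v 4 ≤ v 3 → v 5 ≤ v 4 →
        v 3 ≤ v 0 → v 4 ≤ v 1 → v 5 ≤ v 2 → v 0 = n →
        v ∈ AddSubmonoid.closure
          ({![1,0,0,0,0,0], ![1,0,0,1,0,0], ![1,1,0,0,0,0], ![1,1,0,1,0,0],
            ![1,1,0,1,1,0], ![1,1,1,0,0,0], ![1,1,1,1,0,0], ![1,1,1,1,1,0],
            ![1,1,1,1,1,1]} : Set (Fin 6 → ℕ)) := by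
      intro n
      induction n with
      | zero =>
        intro v h1 h2 h3 h4 h5 h6 h7 hn
        have : v = 0 := by funext i; fin_cases i <;> simp <;> omega
        rw [this]; exact zero_mem _
      | succ n ih =>
        intro v h1 h2 h3 h4 h5 h6 h7 hn
        have hg : (![1, min (v 1) 1, min (v 2) 1, min (v 3) 1, min (v 4) 1, min (v 5) 1] :
            Fin 6 → ℕ) ∈
            ({![1,0,0,0,0,0], ![1,0,0,1,0,0], ![1,1,0,0,0,0], ![1,1,0,1,0,0],
              ![1,1,0,1,1,0], ![1,1,1,0,0,0], ![1,1,1,1,0,0], ![1,1,1,1,1,0],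
              ![1,1,1,1,1,1]} : Set (Fin 6 → ℕ)) :=
          mem_gen _ _ _ _ _ (by omega) (by omega) (by omega) (by omega) (by omega)
            (by omega) (by omega) (by omega) (by omega) (by omega) (by omega) (by omega)
        have hveq : v = ![1, min (v 1) 1, min (v 2) 1, min (v 3) 1, min (v 4) 1, min (v 5) 1]
            + ![v 0 - 1, v 1 - min (v 1) 1, v 2 - min (v 2) 1, v 3 - min (v 3) 1,
               v 4 - min (v 4) 1, v 5 - min (v 5) 1] := by
          funext i
          fin_cases i
          · show v 0 = 1 + (v 0 - 1); omega
          · show v 1 = min (v 1) 1 + (v 1 - min (v 1) 1); omega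
          · show v 2 = min (v 2) 1 + (v 2 - min (v 2) 1); omega
          · show v 3 = min (v 3) 1 + (v 3 - min (v 3) 1); omega
          · show v 4 = min (v 4) 1 + (v 4 - min (v 4) 1); omega
          · show v 5 = min (v 5) 1 + (v 5 - min (v 5) 1); omega
        rw [hveq]
        refine add_mem (AddSubmonoid.subset_closure hg)
          (ih (![v 0 - 1, v 1 - min (v 1) 1, v 2 - min (v 2) 1, v 3 - min (v 3) 1,
               v 4 - min (v 4) 1, v 5 - min (v 5) 1]) ?_ ?_ ?_ ?_ ?_ ?_ ?_ ?_)
        · show v 1 - min (v 1) 1 ≤ v 0 - 1; omega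
        · show v 2 - min (v 2) 1 ≤ v 1 - min (v 1) 1; omega
        · show v 4 - min (v 4) 1 ≤ v 3 - min (v 3) 1; omega
        · show v 5 - min (v 5) 1 ≤ v 4 - min (v 4) 1; omega
        · show v 3 - min (v 3) 1 ≤ v 0 - 1; omega
        · show v 4 - min (v 4) 1 ≤ v 1 - min (v 1) 1; omega
        · show v 5 - min (v 5) 1 ≤ v 2 - min (v 2) 1; omega
        · show v 0 - 1 = n; omega
    intro v hv
    obtain ⟨h1, h2, h3, h4, h5, h6, h7⟩ := (mem_A3_iff v).1 hv
    exact key (v 0) v h1 h2 h3 h4 h5 h6 h7 rfl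
end

section
/- The generating function of pairs of partitions μ ≤ λ contained in a 2×2 box satisfies Q̃_2(x_1, x_2, y_1, y_2) = (1 − x_1^2 y_1 x_2) / [(1 − x_1)(1 − x_1 y_1)(1 − x_1 x_2)(1 − x_1 x_2 y_1)(1 − x_1 x_2 y_1 y_2)]. -/
open Set

section helpers

variable {α β : Type*}

lemma my_summable_range {f : α ⊕ β → ℝ} (h1 : Summable (fun a => f (Sum.inl a))) :
    Summable (f ∘ ((↑) : Set.range (Sum.inl : α → α ⊕ β) → α ⊕ β)) := by
  rw [← (Equiv.ofInjective _ (Sum.inl_injective (α := α) (β := β))).summable_iff]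
  exact h1.congr (fun a => rfl)

lemma my_summable_range' {f : α ⊕ β → ℝ} (h2 : Summable (fun b => f (Sum.inr b))) :
    Summable (f ∘ ((↑) : Set.range (Sum.inr : β → α ⊕ β) → α ⊕ β)) := by
  rw [← (Equiv.ofInjective _ (Sum.inr_injective (α := α) (β := β))).summable_iff]
  exact h2.congr (fun a => rfl)

lemma my_tsum_sum_type {f : α ⊕ β → ℝ}
    (h1 : Summable (fun a => f (Sum.inl a))) (h2 : Summable (fun b => f (Sum.inr b))) :
    ∑' x, f x = (∑' a, f (Sum.inl a)) + ∑' b, f (Sum.inr b) := by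
  have key := Summable.tsum_add_tsum_compl (f := f) (s := Set.range (Sum.inl : α → α ⊕ β))
    (my_summable_range h1) (by rw [Set.compl_range_inl]; exact my_summable_range' h2)
  rw [← key, tsum_range f Sum.inl_injective]
  congr 1
  rw [show (Set.range (Sum.inl : α → α ⊕ β))ᶜ = Set.range Sum.inr from Set.compl_range_inl,
    tsum_range f Sum.inr_injective]

-- 4-fold geometric series
lemma geo1_norm {r : ℝ} (h : |r| < 1) : Summable (fun n : ℕ => ‖r ^ n‖) := by
  simp only [norm_pow, Real.norm_eq_abs]
  exact summable_geometric_of_lt_one (abs_nonneg r) h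

lemma geo2_norm {r s : ℝ} (hr : |r| < 1) (hs : |s| < 1) :
    Summable (fun p : ℕ × ℕ => ‖r ^ p.1 * s ^ p.2‖) := by
  simp only [norm_mul, norm_pow, Real.norm_eq_abs]
  exact (geo1_norm hr).mul_of_nonneg (geo1_norm hs)
    (fun n => by positivity) (fun n => by positivity) |>.congr (fun p => by
      simp [norm_pow, Real.norm_eq_abs])

lemma geo3_norm {r s t : ℝ} (hr : |r| < 1) (hs : |s| < 1) (ht : |t| < 1) :
    Summable (fun p : ℕ × ℕ × ℕ => ‖r ^ p.1 * (s ^ p.2.1 * t ^ p.2.2)‖) := by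
  simp only [norm_mul, norm_pow, Real.norm_eq_abs]
  exact (geo1_norm hr).mul_of_nonneg (geo2_norm hs ht)
    (fun n => by positivity) (fun n => by positivity) |>.congr (fun p => by
      simp [norm_mul, norm_pow, Real.norm_eq_abs])

lemma geo4_norm {r s t u : ℝ} (hr : |r| < 1) (hs : |s| < 1) (ht : |t| < 1) (hu : |u| < 1) :
    Summable (fun p : ℕ × ℕ × ℕ × ℕ => ‖r ^ p.1 * (s ^ p.2.1 * (t ^ p.2.2.1 * u ^ p.2.2.2))‖) := by
  simp only [norm_mul, norm_pow, Real.norm_eq_abs]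
  exact (geo1_norm hr).mul_of_nonneg (geo3_norm hs ht hu)
    (fun n => by positivity) (fun n => by positivity) |>.congr (fun p => by
      simp [norm_mul, norm_pow, Real.norm_eq_abs])

lemma geo4_summable {r s t u : ℝ} (hr : |r| < 1) (hs : |s| < 1) (ht : |t| < 1) (hu : |u| < 1) :
    Summable (fun p : ℕ × ℕ × ℕ × ℕ => r ^ p.1 * (s ^ p.2.1 * (t ^ p.2.2.1 * u ^ p.2.2.2))) :=
  (geo4_norm hr hs ht hu).of_norm

lemma geo2_tsum {r s : ℝ} (hr : |r| < 1) (hs : |s| < 1) :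
    ∑' p : ℕ × ℕ, r ^ p.1 * s ^ p.2 = (1 - r)⁻¹ * (1 - s)⁻¹ := by
  rw [← tsum_geometric_of_abs_lt_one hr, ← tsum_geometric_of_abs_lt_one hs]
  exact (tsum_mul_tsum_of_summable_norm (geo1_norm hr) (geo1_norm hs)).symm

lemma geo3_tsum {r s t : ℝ} (hr : |r| < 1) (hs : |s| < 1) (ht : |t| < 1) :
    ∑' p : ℕ × ℕ × ℕ, r ^ p.1 * (s ^ p.2.1 * t ^ p.2.2) = (1 - r)⁻¹ * ((1 - s)⁻¹ * (1 - t)⁻¹) := by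
  rw [← tsum_geometric_of_abs_lt_one hr, ← geo2_tsum hs ht]
  exact (tsum_mul_tsum_of_summable_norm (geo1_norm hr) (geo2_norm hs ht)).symm

lemma geo4_tsum {r s t u : ℝ} (hr : |r| < 1) (hs : |s| < 1) (ht : |t| < 1) (hu : |u| < 1) :
    ∑' p : ℕ × ℕ × ℕ × ℕ, r ^ p.1 * (s ^ p.2.1 * (t ^ p.2.2.1 * u ^ p.2.2.2)) =
      (1 - r)⁻¹ * ((1 - s)⁻¹ * ((1 - t)⁻¹ * (1 - u)⁻¹)) := by
  rw [← tsum_geometric_of_abs_lt_one hr, ← geo3_tsum hs ht hu]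
  exact (tsum_mul_tsum_of_summable_norm (geo1_norm hr) (geo3_norm hs ht hu)).symm

lemma half_mul {a b : ℝ} (ha : |a| < 1/2) (hb : |b| < 1/2) : |a * b| < 1/2 := by
  rw [abs_mul]; nlinarith [abs_nonneg a, abs_nonneg b]

-- the equivalence
abbrev PairCone := {q : (ℕ × ℕ) × (ℕ × ℕ) //
    q.1.2 ≤ q.1.1 ∧ q.2.2 ≤ q.2.1 ∧ q.2.1 ≤ q.1.1 ∧ q.2.2 ≤ q.1.2}

def coneTo : (ℕ×ℕ×ℕ×ℕ) ⊕ (ℕ×ℕ×ℕ×ℕ) → PairCone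
  | Sum.inl (a, c, d, e) => ⟨((a+c+d+e, c+d+e), (d+e, e)),
      ⟨show c+d+e ≤ a+c+d+e by omega, show e ≤ d+e by omega,
       show d+e ≤ a+c+d+e by omega, show e ≤ c+d+e by omega⟩⟩
  | Sum.inr (a, b, d, e) => ⟨((a+b+1+d+e, d+e), (b+1+d+e, e)),
      ⟨show d+e ≤ a+b+1+d+e by omega, show e ≤ b+1+d+e by omega,
       show b+1+d+e ≤ a+b+1+d+e by omega, show e ≤ d+e by omega⟩⟩

def coneInv (q : PairCone) : (ℕ×ℕ×ℕ×ℕ) ⊕ (ℕ×ℕ×ℕ×ℕ) :=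
  if (q : (ℕ×ℕ)×(ℕ×ℕ)).2.1 ≤ (q : (ℕ×ℕ)×(ℕ×ℕ)).1.2 then
    Sum.inl ((q : (ℕ×ℕ)×(ℕ×ℕ)).1.1 - (q : (ℕ×ℕ)×(ℕ×ℕ)).1.2,
      (q : (ℕ×ℕ)×(ℕ×ℕ)).1.2 - (q : (ℕ×ℕ)×(ℕ×ℕ)).2.1,
      (q : (ℕ×ℕ)×(ℕ×ℕ)).2.1 - (q : (ℕ×ℕ)×(ℕ×ℕ)).2.2, (q : (ℕ×ℕ)×(ℕ×ℕ)).2.2)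
  else
    Sum.inr ((q : (ℕ×ℕ)×(ℕ×ℕ)).1.1 - (q : (ℕ×ℕ)×(ℕ×ℕ)).2.1,
      (q : (ℕ×ℕ)×(ℕ×ℕ)).2.1 - (q : (ℕ×ℕ)×(ℕ×ℕ)).1.2 - 1,
      (q : (ℕ×ℕ)×(ℕ×ℕ)).1.2 - (q : (ℕ×ℕ)×(ℕ×ℕ)).2.2, (q : (ℕ×ℕ)×(ℕ×ℕ)).2.2)

def coneEquiv : (ℕ×ℕ×ℕ×ℕ) ⊕ (ℕ×ℕ×ℕ×ℕ) ≃ PairCone where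
  toFun := coneTo
  invFun := coneInv
  left_inv x := by
    match x with
    | Sum.inl (a, c, d, e) =>
      rw [coneTo, coneInv, if_pos (show d+e ≤ c+d+e by omega)]
      simp only [Sum.inl.injEq, Prod.mk.injEq]
      refine ⟨show a+c+d+e - (c+d+e) = a by omega, show c+d+e - (d+e) = c by omega,
        show d+e - e = d by omega, trivial⟩
    | Sum.inr (a, b, d, e) =>
      rw [coneTo, coneInv, if_neg (show ¬ (b+1+d+e ≤ d+e) by omega)]
      simp only [Sum.inr.injEq, Prod.mk.injEq]
      refine ⟨show a+b+1+d+e - (b+1+d+e) = a by omega, show b+1+d+e - (d+e) - 1 = b by omega,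
        show d+e - e = d by omega, trivial⟩
  right_inv q := by
    obtain ⟨⟨⟨l1, l2⟩, m1, m2⟩, h1, h2, h3, h4⟩ := q
    simp only at h1 h2 h3 h4
    rw [coneInv]
    by_cases h : m1 ≤ l2
    · rw [if_pos h, coneTo]
      exact Subtype.ext (by simp only [Prod.mk.injEq, and_true]; omega)
    · rw [if_neg h, coneTo]
      exact Subtype.ext (by simp only [Prod.mk.injEq, and_true]; omega)

end helpers

theorem stmt_10 (x1 x2 y1 y2 : ℝ)
    (hx1 : |x1| < 1/2) (hx2 : |x2| < 1/2)
    (hy1 : |y1| < 1/2) (hy2 : |y2| < 1/2) :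
    ∑' q : {q : (ℕ × ℕ) × (ℕ × ℕ) //
        q.1.2 ≤ q.1.1 ∧ q.2.2 ≤ q.2.1 ∧ q.2.1 ≤ q.1.1 ∧ q.2.2 ≤ q.1.2},
      x1 ^ (q : (ℕ × ℕ) × (ℕ × ℕ)).1.1 * x2 ^ (q : (ℕ × ℕ) × (ℕ × ℕ)).1.2 *
        y1 ^ (q : (ℕ × ℕ) × (ℕ × ℕ)).2.1 * y2 ^ (q : (ℕ × ℕ) × (ℕ × ℕ)).2.2 =
    (1 - x1 ^ 2 * y1 * x2) /
      ((1 - x1) * (1 - x1 * y1) * (1 - x1 * x2) * (1 - x1 * x2 * y1) *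
        (1 - x1 * x2 * y1 * y2)) := by
  set f : PairCone → ℝ := fun q =>
      x1 ^ (q : (ℕ × ℕ) × (ℕ × ℕ)).1.1 * x2 ^ (q : (ℕ × ℕ) × (ℕ × ℕ)).1.2 *
        y1 ^ (q : (ℕ × ℕ) × (ℕ × ℕ)).2.1 * y2 ^ (q : (ℕ × ℕ) × (ℕ × ℕ)).2.2 with hf
  -- abbreviations and bounds
  have h1 : |x1| < 1 := by linarith [abs_nonneg x1]
  have hxy : |x1 * y1| < 1 := by linarith [half_mul hx1 hy1, abs_nonneg (x1*y1)]
  have hxx : |x1 * x2| < 1 := by linarith [half_mul hx1 hx2, abs_nonneg (x1*x2)]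
  have hxxy : |x1 * x2 * y1| < 1 := by
    linarith [half_mul (half_mul hx1 hx2) hy1, abs_nonneg (x1*x2*y1)]
  have hxxyy : |x1 * x2 * y1 * y2| < 1 := by
    linarith [half_mul (half_mul (half_mul hx1 hx2) hy1) hy2, abs_nonneg (x1*x2*y1*y2)]
  -- terms along the two branches
  have hL : ∀ p : ℕ×ℕ×ℕ×ℕ, f (coneEquiv (Sum.inl p)) =
      x1 ^ p.1 * ((x1*x2) ^ p.2.1 * ((x1*x2*y1) ^ p.2.2.1 * (x1*x2*y1*y2) ^ p.2.2.2)) := by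
    rintro ⟨a, c, d, e⟩
    simp only [hf, coneEquiv, Equiv.coe_fn_mk, coneTo]
    ring
  have hR : ∀ p : ℕ×ℕ×ℕ×ℕ, f (coneEquiv (Sum.inr p)) =
      (x1*y1) * (x1 ^ p.1 * ((x1*y1) ^ p.2.1 * ((x1*x2*y1) ^ p.2.2.1 * (x1*x2*y1*y2) ^ p.2.2.2))) := by
    rintro ⟨a, b, d, e⟩
    simp only [hf, coneEquiv, Equiv.coe_fn_mk, coneTo]
    ring
  have sumL : Summable (fun p => f (coneEquiv (Sum.inl p))) := by
    refine Summable.congr ?_ (fun p => (hL p).symm)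
    exact geo4_summable h1 hxx hxxy hxxyy
  have sumR : Summable (fun p => f (coneEquiv (Sum.inr p))) := by
    refine Summable.congr ?_ (fun p => (hR p).symm)
    exact ((geo4_summable h1 hxy hxxy hxxyy).mul_left (x1*y1))
  calc ∑' q, f q = ∑' x, f (coneEquiv x) := (coneEquiv.tsum_eq f).symm
    _ = (∑' p, f (coneEquiv (Sum.inl p))) + ∑' p, f (coneEquiv (Sum.inr p)) :=
        my_tsum_sum_type sumL sumR
    _ = (1-x1)⁻¹ * ((1-x1*x2)⁻¹ * ((1-x1*x2*y1)⁻¹ * (1-x1*x2*y1*y2)⁻¹))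
        + (x1*y1) * ((1-x1)⁻¹ * ((1-x1*y1)⁻¹ * ((1-x1*x2*y1)⁻¹ * (1-x1*x2*y1*y2)⁻¹))) := by
        rw [tsum_congr hL, tsum_congr hR, geo4_tsum h1 hxx hxxy hxxyy, tsum_mul_left,
          geo4_tsum h1 hxy hxxy hxxyy]
    _ = (1 - x1 ^ 2 * y1 * x2) /
      ((1 - x1) * (1 - x1 * y1) * (1 - x1 * x2) * (1 - x1 * x2 * y1) *
        (1 - x1 * x2 * y1 * y2)) := by
        have n1 : (1 - x1) ≠ 0 := by intro h; rw [sub_eq_zero] at h; rw [← h] at h1; simp at h1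
        have n2 : (1 - x1*y1) ≠ 0 := by intro h; rw [sub_eq_zero] at h; rw [← h] at hxy; simp at hxy
        have n3 : (1 - x1*x2) ≠ 0 := by intro h; rw [sub_eq_zero] at h; rw [← h] at hxx; simp at hxx
        have n4 : (1 - x1*x2*y1) ≠ 0 := by intro h; rw [sub_eq_zero] at h; rw [← h] at hxxy; simp at hxxy
        have n5 : (1 - x1*x2*y1*y2) ≠ 0 := by intro h; rw [sub_eq_zero] at h; rw [← h] at hxxyy; simp at hxxyy
        field_simp
        ring
end

section
/- Every lattice point of the polytope P_k = C_k ∩ {λ_1 = 1} is a vertex of P_k; that is, the set of integer points of P_k equals U_k = {((1^a,0^{k−a}),(1^c,0^{k−c})) : k ≥ a ≥ c ≥ 0, a ≥ 1}, and each such point is an extreme point of P_k. -/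
/-- The real cone `C_k` of 2-row plane partition shapes with `k` columns. -/
def Ck (k : ℕ) : Set ((Fin k → ℝ) × (Fin k → ℝ)) :=
  {p | (∀ i j : Fin k, i ≤ j → p.1 j ≤ p.1 i) ∧ (∀ i, 0 ≤ p.1 i) ∧
       (∀ i j : Fin k, i ≤ j → p.2 j ≤ p.2 i) ∧ (∀ i, 0 ≤ p.2 i) ∧
       (∀ i, p.2 i ≤ p.1 i)}

/-- The polytope `P_k`: the slice of `C_k` by the hyperplane `λ₁ = 1`. -/
def Pk (k : ℕ) (hk : 0 < k) : Set ((Fin k → ℝ) × (Fin k → ℝ)) :=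
  {p | p ∈ Ck k ∧ p.1 ⟨0, hk⟩ = 1}

/-- The real vector of `a` ones followed by `k - a` zeros. -/
def onesZerosR (k a : ℕ) : Fin k → ℝ :=
  fun i => if (i : ℕ) < a then 1 else 0

/-- The vertex set `U_k`. -/
def UsetR (k : ℕ) : Set ((Fin k → ℝ) × (Fin k → ℝ)) :=
  {p | ∃ a c : ℕ, a ≤ k ∧ c ≤ a ∧ 1 ≤ a ∧
        p = (onesZerosR k a, onesZerosR k c)}

lemma Pk_bounds {k : ℕ} {hk : 0 < k} {p : (Fin k → ℝ) × (Fin k → ℝ)}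
    (hp : p ∈ Pk k hk) (i : Fin k) :
    0 ≤ p.1 i ∧ p.1 i ≤ 1 ∧ 0 ≤ p.2 i ∧ p.2 i ≤ 1 := by
  obtain ⟨⟨h1, h2, h3, h4, h5⟩, h6⟩ := hp
  have hle : p.1 i ≤ 1 := by
    have := h1 ⟨0, hk⟩ i (by simp [Fin.le_def])
    linarith [h6 ▸ this]
  exact ⟨h2 i, hle, h4 i, (h5 i).trans hle⟩

lemma onesZerosR_mem {k : ℕ} (hk : 0 < k) {a c : ℕ} (ha : a ≤ k) (hca : c ≤ a)
    (h1 : 1 ≤ a) : (onesZerosR k a, onesZerosR k c) ∈ Pk k hk := by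
  refine ⟨⟨?_, ?_, ?_, ?_, ?_⟩, ?_⟩ <;> simp only [onesZerosR]
  · intro i j hij
    simp only [Fin.le_def] at hij
    split <;> split <;> first | omega | norm_num
  · intro i; split <;> norm_num
  · intro i j hij
    simp only [Fin.le_def] at hij
    split <;> split <;> first | omega | norm_num
  · intro i; split <;> norm_num
  · intro i; split <;> split <;> first | omega | norm_num
  · exact if_pos h1

lemma exists_onesZeros {k : ℕ} (v : Fin k → ℝ)
    (hmono : ∀ i j : Fin k, i ≤ j → v j ≤ v i)
    (h01 : ∀ i, v i = 0 ∨ v i = 1) :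
    ∃ a, a ≤ k ∧ v = onesZerosR k a := by
  classical
  by_cases hS : ∃ n, ∃ h : n < k, v ⟨n, h⟩ = 0
  · set a := Nat.find hS with haa
    obtain ⟨hak, hva⟩ := Nat.find_spec hS
    refine ⟨a, le_of_lt hak, ?_⟩
    funext i
    simp only [onesZerosR]
    split
    · rename_i hi
      rcases h01 i with h0 | h1
      · exact absurd ⟨i.isLt, by simpa using h0⟩ (Nat.find_min hS hi)
      · exact h1
    · rename_i hi
      push_neg at hi
      have hle : v i ≤ v ⟨a, hak⟩ := hmono ⟨a, hak⟩ i (by simp [Fin.le_def, hi])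
      rw [hva] at hle
      rcases h01 i with h0 | h1
      · exact h0
      · linarith [h1 ▸ hle]
  · push_neg at hS
    refine ⟨k, le_refl k, ?_⟩
    funext i
    simp only [onesZerosR, if_pos i.isLt]
    rcases h01 i with h0 | h1
    · exact absurd h0 (by simpa using hS i.val i.isLt)
    · exact h1

lemma seg_zero {t s u v : ℝ} (ht : 0 < t) (hs : 0 < s)
    (hu : 0 ≤ u) (hv : 0 ≤ v) (h : t * u + s * v = 0) : u = 0 ∧ v = 0 := by
  have h1 : t * u = 0 :=
    le_antisymm (by nlinarith [mul_nonneg hs.le hv]) (mul_nonneg ht.le hu)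
  have h2 : s * v = 0 := by linarith
  constructor
  · rcases mul_eq_zero.1 h1 with h | h
    · linarith
    · exact h
  · rcases mul_eq_zero.1 h2 with h | h
    · linarith
    · exact h

lemma seg_one {t s u v : ℝ} (ht : 0 < t) (hs : 0 < s) (hts : t + s = 1)
    (hu : u ≤ 1) (hv : v ≤ 1) (h : t * u + s * v = 1) : u = 1 ∧ v = 1 := by
  have := seg_zero ht hs (by linarith : (0:ℝ) ≤ 1 - u) (by linarith : (0:ℝ) ≤ 1 - v)
    (by ring_nf; nlinarith)
  constructor <;> linarith [this.1, this.2]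

theorem stmt_14 (k : ℕ) (hk : 0 < k) :
    {p ∈ Pk k hk | (∀ i, ∃ n : ℤ, p.1 i = n) ∧ ∀ i, ∃ n : ℤ, p.2 i = n} =
      UsetR k ∧
    UsetR k ⊆ Set.extremePoints ℝ (Pk k hk) := by
  constructor
  · ext p
    constructor
    · rintro ⟨hp, hint1, hint2⟩
      obtain ⟨⟨h1, h2, h3, h4, h5⟩, h6⟩ := hp
      have h01a : ∀ i, p.1 i = 0 ∨ p.1 i = 1 := by
        intro i
        obtain ⟨n, hn⟩ := hint1 i
        have hb := Pk_bounds (p := p) ⟨⟨h1, h2, h3, h4, h5⟩, h6⟩ i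
        have h0 : (0:ℝ) ≤ (n:ℝ) := hn ▸ hb.1
        have hle : (n:ℝ) ≤ 1 := hn ▸ hb.2.1
        have h0' : (0:ℤ) ≤ n := by exact_mod_cast h0
        have h1' : n ≤ 1 := by exact_mod_cast hle
        have : n = 0 ∨ n = 1 := by omega
        rcases this with rfl | rfl
        · left; simpa using hn
        · right; simpa using hn
      have h01c : ∀ i, p.2 i = 0 ∨ p.2 i = 1 := by
        intro i
        obtain ⟨n, hn⟩ := hint2 i
        have hb := Pk_bounds (p := p) ⟨⟨h1, h2, h3, h4, h5⟩, h6⟩ i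
        have h0 : (0:ℝ) ≤ (n:ℝ) := hn ▸ hb.2.2.1
        have hle : (n:ℝ) ≤ 1 := hn ▸ hb.2.2.2
        have h0' : (0:ℤ) ≤ n := by exact_mod_cast h0
        have h1' : n ≤ 1 := by exact_mod_cast hle
        have : n = 0 ∨ n = 1 := by omega
        rcases this with rfl | rfl
        · left; simpa using hn
        · right; simpa using hn
      obtain ⟨a, hak, hva⟩ := exists_onesZeros p.1 h1 h01a
      obtain ⟨c, hck, hvc⟩ := exists_onesZeros p.2 h3 h01c
      have h1a : 1 ≤ a := by
        by_contra h
        have ha0 : a = 0 := by omega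
        rw [hva, ha0] at h6
        simp [onesZerosR] at h6
      have hca : c ≤ a := by
        by_contra h
        push_neg at h
        have hlt : a < k := lt_of_lt_of_le h hck
        have e1 : p.1 ⟨a, hlt⟩ = 0 := by rw [hva]; simp [onesZerosR]
        have e2 : p.2 ⟨a, hlt⟩ = 1 := by rw [hvc]; simp [onesZerosR, h]
        have := h5 ⟨a, hlt⟩
        rw [e1, e2] at this
        linarith
      exact ⟨a, c, hak, hca, h1a, by rw [← hva, ← hvc]⟩
    · rintro ⟨a, c, hak, hca, h1a, rfl⟩
      refine ⟨onesZerosR_mem hk hak hca h1a, ?_, ?_⟩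
      · intro i
        refine ⟨if (i : ℕ) < a then 1 else 0, ?_⟩
        simp only [onesZerosR]
        split <;> norm_num
      · intro i
        refine ⟨if (i : ℕ) < c then 1 else 0, ?_⟩
        simp only [onesZerosR]
        split <;> norm_num
  · rintro p ⟨a, c, hak, hca, h1a, rfl⟩
    rw [mem_extremePoints]
    refine ⟨onesZerosR_mem hk hak hca h1a, ?_⟩
    rintro x hx y hy ⟨t, s, ht, hs, hts, heq⟩
    have hbx := fun i => Pk_bounds hx i
    have hby := fun i => Pk_bounds hy i
    have key1 : ∀ i : Fin k, x.1 i = onesZerosR k a i ∧ y.1 i = onesZerosR k a i := by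
      intro i
      have he : t * x.1 i + s * y.1 i = onesZerosR k a i := by
        have := congrFun (congrArg Prod.fst heq) i
        simpa using this
      simp only [onesZerosR] at he ⊢
      by_cases hia : (i : ℕ) < a
      · simp only [if_pos hia] at he ⊢
        exact seg_one ht hs hts (hbx i).2.1 (hby i).2.1 he
      · simp only [if_neg hia] at he ⊢
        exact seg_zero ht hs (hbx i).1 (hby i).1 he
    have key2 : ∀ i : Fin k, x.2 i = onesZerosR k c i ∧ y.2 i = onesZerosR k c i := by
      intro i
      have he : t * x.2 i + s * y.2 i = onesZerosR k c i := by
        have := congrFun (congrArg Prod.snd heq) i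
        simpa using this
      simp only [onesZerosR] at he ⊢
      by_cases hic : (i : ℕ) < c
      · simp only [if_pos hic] at he ⊢
        exact seg_one ht hs hts (hbx i).2.2.2 (hby i).2.2.2 he
      · simp only [if_neg hic] at he ⊢
        exact seg_zero ht hs (hbx i).2.2.1 (hby i).2.2.1 he
    constructor
    · exact Prod.ext (funext fun i => (key1 i).1) (funext fun i => (key2 i).1)
    · exact Prod.ext (funext fun i => (key1 i).2) (funext fun i => (key2 i).2)
end
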